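/- Let u : ℝ² → ℝ be smooth and positive satisfying (log u)_xy = u − c²/u² for a constant c, and set v = (1/3)u_xx/u, w = (1/3)u_yy/u. Then (u, v, w) satisfies the stationary VN system: u_xxx − 3(vu)_x = u_yyy − 3(wu)_y, w_x = u_y, v_y = u_x. -/

import Mathlib

noncomputable def px {E : Type*} [NormedAddCommGroup E] [NormedSpace ℝ E]
    (f : ℝ → ℝ → E) : ℝ → ℝ → E := fun x y => deriv (fun x' => f x' y) x

noncomputable def py {E : Type*} [NormedAddCommGroup E] [NormedSpace ℝ E]
    (f : ℝ → ℝ → E) : ℝ → ℝ → E := fun x y => deriv (fun y' => f x y') y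

def Smooth2 {E : Type*} [NormedAddCommGroup E] [NormedSpace ℝ E]
    (f : ℝ → ℝ → E) : Prop := ContDiff ℝ (⊤ : ℕ∞) (fun q : ℝ × ℝ => f q.1 q.2)

section helpers

variable (f : ℝ → ℝ → ℝ)

lemma hasDerivAt_sliceX (F : ℝ × ℝ → ℝ) {x y : ℝ} (hF : DifferentiableAt ℝ F (x, y)) :
    HasDerivAt (fun x' => F (x', y)) (fderiv ℝ F (x, y) (1, 0)) x := by
  have h1 : HasDerivAt (fun x' : ℝ => (x', y)) ((1 : ℝ), (0 : ℝ)) x :=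
    (hasDerivAt_id x).prodMk (hasDerivAt_const x y)
  exact hF.hasFDerivAt.comp_hasDerivAt x h1

lemma hasDerivAt_sliceY (F : ℝ × ℝ → ℝ) {x y : ℝ} (hF : DifferentiableAt ℝ F (x, y)) :
    HasDerivAt (fun y' => F (x, y')) (fderiv ℝ F (x, y) (0, 1)) y := by
  have h1 : HasDerivAt (fun y' : ℝ => (x, y')) ((0 : ℝ), (1 : ℝ)) y :=
    (hasDerivAt_const y x).prodMk (hasDerivAt_id y)
  exact hF.hasFDerivAt.comp_hasDerivAt y h1

lemma px_eq (hf : Smooth2 f) (x y : ℝ) :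
    px f x y = fderiv ℝ (fun q : ℝ × ℝ => f q.1 q.2) (x, y) (1, 0) :=
  (hasDerivAt_sliceX _ ((hf.differentiable (by simp)) (x, y))).deriv

lemma py_eq (hf : Smooth2 f) (x y : ℝ) :
    py f x y = fderiv ℝ (fun q : ℝ × ℝ => f q.1 q.2) (x, y) (0, 1) :=
  (hasDerivAt_sliceY _ ((hf.differentiable (by simp)) (x, y))).deriv

lemma smooth2_px (hf : Smooth2 f) : Smooth2 (px f) := by
  have : (fun q : ℝ × ℝ => px f q.1 q.2)
      = fun q : ℝ × ℝ => fderiv ℝ (fun q : ℝ × ℝ => f q.1 q.2) q (1, 0) := by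
    funext q
    exact px_eq f hf q.1 q.2
  rw [Smooth2, this]
  exact (hf.fderiv_right (by simp)).clm_apply contDiff_const

lemma smooth2_py (hf : Smooth2 f) : Smooth2 (py f) := by
  have : (fun q : ℝ × ℝ => py f q.1 q.2)
      = fun q : ℝ × ℝ => fderiv ℝ (fun q : ℝ × ℝ => f q.1 q.2) q (0, 1) := by
    funext q
    exact py_eq f hf q.1 q.2
  rw [Smooth2, this]
  exact (hf.fderiv_right (by simp)).clm_apply contDiff_const

lemma hasDerivAt_px (hf : Smooth2 f) (x y : ℝ) :
    HasDerivAt (fun x' => f x' y) (px f x y) x :=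
  (hasDerivAt_sliceX _ ((hf.differentiable (by simp)) (x, y))).differentiableAt.hasDerivAt

lemma hasDerivAt_py (hf : Smooth2 f) (x y : ℝ) :
    HasDerivAt (fun y' => f x y') (py f x y) y :=
  (hasDerivAt_sliceY _ ((hf.differentiable (by simp)) (x, y))).differentiableAt.hasDerivAt

lemma clairaut (hf : Smooth2 f) (x y : ℝ) : px (py f) x y = py (px f) x y := by
  set F : ℝ × ℝ → ℝ := fun q => f q.1 q.2 with hF
  have hdF : Differentiable ℝ F := hf.differentiable (by simp)
  have hfd : ContDiff ℝ (⊤ : ℕ∞) (fderiv ℝ F) := hf.fderiv_right (by simp)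
  have hfd' : Differentiable ℝ (fderiv ℝ F) := hfd.differentiable (by simp)
  have hsym := second_derivative_symmetric (f' := fderiv ℝ F)
    (fun p => (hdF p).hasFDerivAt) (hfd' (x, y)).hasFDerivAt
  have hGv : ∀ v : ℝ × ℝ, Differentiable ℝ (fun q => fderiv ℝ F q v) :=
    fun v => (hfd.clm_apply contDiff_const).differentiable (by simp)
  have key : ∀ v w : ℝ × ℝ,
      fderiv ℝ (fun q => fderiv ℝ F q v) (x, y) w = fderiv ℝ (fderiv ℝ F) (x, y) w v := by
    intro v w
    rw [fderiv_clm_apply (hfd' (x, y)) (differentiableAt_const v)]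
    simp
  -- px (py f) x y
  have h1 : px (py f) x y = fderiv ℝ (fun q => fderiv ℝ F q (0, 1)) (x, y) (1, 0) := by
    have he : (fun x' => py f x' y) = fun x' => fderiv ℝ F (x', y) ((0 : ℝ), (1 : ℝ)) := by
      funext x'
      exact py_eq f hf x' y
    show deriv (fun x' => py f x' y) x = _
    rw [he]
    exact (hasDerivAt_sliceX _ ((hGv (0, 1)) (x, y))).deriv
  have h2 : py (px f) x y = fderiv ℝ (fun q => fderiv ℝ F q (1, 0)) (x, y) (0, 1) := by
    have he : (fun y' => px f x y') = fun y' => fderiv ℝ F (x, y') ((1 : ℝ), (0 : ℝ)) := by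
      funext y'
      exact px_eq f hf x y'
    show deriv (fun y' => px f x y') y = _
    rw [he]
    exact (hasDerivAt_sliceY _ ((hGv (1, 0)) (x, y))).deriv
  rw [h1, h2, key, key, hsym]

end helpers


set_option maxHeartbeats 1000000 in
/-- If a positive smooth `u` satisfies `(log u)_xy = u - c²/u²` and
`v = (1/3)u_xx/u`, `w = (1/3)u_yy/u`, then `(u, v, w)` solves
the stationary VN system. -/
theorem tzitzeica_solves_sVN (u v w : ℝ → ℝ → ℝ) (c : ℝ)
    (hu : Smooth2 u) (hpos : ∀ x y, 0 < u x y)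
    (hTz : ∀ x y, px (py (fun x y => Real.log (u x y))) x y = u x y - c ^ 2 / (u x y) ^ 2)
    (hv : ∀ x y, v x y = (1/3) * px (px u) x y / u x y)
    (hw : ∀ x y, w x y = (1/3) * py (py u) x y / u x y) :
    (∀ x y, px (px (px u)) x y - 3 * px (fun x y => v x y * u x y) x y =
      py (py (py u)) x y - 3 * py (fun x y => w x y * u x y) x y) ∧
    (∀ x y, px w x y = py u x y) ∧
    (∀ x y, py v x y = px u x y) := by
  have une : ∀ x y, u x y ≠ 0 := fun x y => (hpos x y).ne'
  set L : ℝ → ℝ → ℝ := fun x y => Real.log (u x y) with hLdef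
  have hTzL : ∀ x y, px (py L) x y = u x y - c ^ 2 / (u x y) ^ 2 := hTz
  have hL : Smooth2 L := by
    rw [Smooth2, contDiff_iff_contDiffAt]
    intro q
    exact (Real.contDiffAt_log.2 (une q.1 q.2)).comp q hu.contDiffAt
  have h_pyL : ∀ x y, py L x y = py u x y / u x y := fun x y =>
    ((hasDerivAt_py u hu x y).log (une x y)).deriv
  have h_pxL : ∀ x y, px L x y = px u x y / u x y := fun x y =>
    ((hasDerivAt_px u hu x y).log (une x y)).deriv
  have h_pypyL : ∀ x y, py (py L) x y =
      (py (py u) x y * u x y - py u x y * py u x y) / u x y ^ 2 := by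
    intro x y
    have he : (fun y' => py L x y') = fun y' => py u x y' / u x y' :=
      funext fun y' => h_pyL x y'
    show deriv (fun y' => py L x y') y = _
    rw [he]
    exact ((hasDerivAt_py (py u) (smooth2_py u hu) x y).div
      (hasDerivAt_py u hu x y) (une x y)).deriv
  have h_pxpxL : ∀ x y, px (px L) x y =
      (px (px u) x y * u x y - px u x y * px u x y) / u x y ^ 2 := by
    intro x y
    have he : (fun x' => px L x' y) = fun x' => px u x' y / u x' y :=
      funext fun x' => h_pxL x' y
    show deriv (fun x' => px L x' y) x = _
    rw [he]
    exact ((hasDerivAt_px (px u) (smooth2_px u hu) x y).div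
      (hasDerivAt_px u hu x y) (une x y)).deriv
  -- derivative of the Tzitzeica equation in y
  have h3 : ∀ x y, py (px (py L)) x y =
      py u x y + 2 * c ^ 2 * py u x y / u x y ^ 3 := by
    intro x y
    have he : (fun y' => px (py L) x y') = fun y' => u x y' - c ^ 2 / u x y' ^ 2 :=
      funext fun y' => hTzL x y'
    have hd : HasDerivAt (fun y' => u x y' - c ^ 2 / u x y' ^ 2)
        (py u x y + 2 * c ^ 2 * py u x y / u x y ^ 3) y := by
      have h1 := (hasDerivAt_const y (c ^ 2)).div
        ((hasDerivAt_py u hu x y).pow 2) (pow_ne_zero 2 (une x y))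
      have h2 := (hasDerivAt_py u hu x y).sub h1
      refine h2.congr_deriv ?_
      rw [show ((fun y' => u x y') ^ 2) y = u x y ^ 2 from rfl]
      field_simp [une x y]
      ring
    show deriv (fun y' => px (py L) x y') y = _
    rw [he]
    exact hd.deriv
  -- the symmetric fact `py (px L) = u - c²/u²` and its x-derivative
  have hypxL : ∀ x y, py (px L) x y = u x y - c ^ 2 / (u x y) ^ 2 := by
    intro x y
    rw [← clairaut L hL x y]
    exact hTzL x y
  have h3x : ∀ x y, px (py (px L)) x y =
      px u x y + 2 * c ^ 2 * px u x y / u x y ^ 3 := by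
    intro x y
    have he : (fun x' => py (px L) x' y) = fun x' => u x' y - c ^ 2 / u x' y ^ 2 :=
      funext fun x' => hypxL x' y
    have hd : HasDerivAt (fun x' => u x' y - c ^ 2 / u x' y ^ 2)
        (px u x y + 2 * c ^ 2 * px u x y / u x y ^ 3) x := by
      have h1 := (hasDerivAt_const x (c ^ 2)).div
        ((hasDerivAt_px u hu x y).pow 2) (pow_ne_zero 2 (une x y))
      have h2 := (hasDerivAt_px u hu x y).sub h1
      refine h2.congr_deriv ?_
      rw [show ((fun x' => u x' y) ^ 2) x = u x y ^ 2 from rfl]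
      field_simp [une x y]
      ring
    show deriv (fun x' => py (px L) x' y) x = _
    rw [he]
    exact hd.deriv
  -- express w and v through L
  have hwL : ∀ x y, w x y = 1/3 * (py (py L) x y + py L x y * py L x y) := by
    intro x y
    rw [hw x y, h_pypyL x y, h_pyL x y]
    field_simp [une x y]
    ring
  have hvL : ∀ x y, v x y = 1/3 * (px (px L) x y + px L x y * px L x y) := by
    intro x y
    rw [hv x y, h_pxpxL x y, h_pxL x y]
    field_simp [une x y]
    ring
  refine ⟨?_, ?_, ?_⟩
  · -- first equation: both sides vanish
    intro x y
    have e1 : (fun x y => v x y * u x y) = fun x y => 1/3 * px (px u) x y := by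
      funext a b
      rw [hv a b, div_mul_cancel₀ _ (une a b)]
    have e2 : (fun x y => w x y * u x y) = fun x y => 1/3 * py (py u) x y := by
      funext a b
      rw [hw a b, div_mul_cancel₀ _ (une a b)]
    have d1 : px (fun x y => v x y * u x y) x y = 1/3 * px (px (px u)) x y := by
      rw [e1]
      exact ((hasDerivAt_px (px (px u)) (smooth2_px _ (smooth2_px _ hu)) x y).const_mul
        ((1:ℝ)/3)).deriv
    have d2 : py (fun x y => w x y * u x y) x y = 1/3 * py (py (py u)) x y := by
      rw [e2]
      exact ((hasDerivAt_py (py (py u)) (smooth2_py _ (smooth2_py _ hu)) x y).const_mul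
        ((1:ℝ)/3)).deriv
    rw [d1, d2]
    ring
  · -- w_x = u_y
    intro x y
    have he : (fun x' => w x' y) = fun x' => 1/3 * (py (py L) x' y + py L x' y * py L x' y) :=
      funext fun x' => hwL x' y
    have hd := (((hasDerivAt_px (py (py L)) (smooth2_py _ (smooth2_py _ hL)) x y).add
      ((hasDerivAt_px (py L) (smooth2_py _ hL) x y).mul
        (hasDerivAt_px (py L) (smooth2_py _ hL) x y))).const_mul ((1:ℝ)/3))
    have hfin : px w x y = 1/3 * (px (py (py L)) x y +
        (px (py L) x y * py L x y + py L x y * px (py L) x y)) := by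
      show deriv (fun x' => w x' y) x = _
      rw [he]
      exact hd.deriv
    rw [hfin, clairaut (py L) (smooth2_py _ hL) x y, h3 x y, hTzL x y, h_pyL x y]
    field_simp [une x y]
    ring
  · -- v_y = u_x
    intro x y
    have he : (fun y' => v x y') = fun y' => 1/3 * (px (px L) x y' + px L x y' * px L x y') :=
      funext fun y' => hvL x y'
    have hd := (((hasDerivAt_py (px (px L)) (smooth2_px _ (smooth2_px _ hL)) x y).add
      ((hasDerivAt_py (px L) (smooth2_px _ hL) x y).mul
        (hasDerivAt_py (px L) (smooth2_px _ hL) x y))).const_mul ((1:ℝ)/3))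
    have hfin : py v x y = 1/3 * (py (px (px L)) x y +
        (py (px L) x y * px L x y + px L x y * py (px L) x y)) := by
      show deriv (fun y' => v x y') y = _
      rw [he]
      exact hd.deriv
    rw [hfin, ← clairaut (px L) (smooth2_px _ hL) x y, h3x x y, hypxL x y, h_pxL x y]
    field_simp [une x y]
    ring
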